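/- For f(x,u,p,q) = −x·p⁴q³ + u·p³q³ on the open set {(x,u,p,q) : p ≠ 0, q ≠ 0}, the invariants evaluate to I₁ = 3p³q²(px − u), I₂ = 0, I₃ = −p³q³ ≠ 0, J₃ = −pq, I₄ = −p, I₅ = −1/p², I₇ = 0, Q = 0 and K = −3/p⁴; all the relative invariants I₆, I₈, I₁₀, I₁₁, I₁₂, I₁₃, I₁₄, I₁₅ vanish identically, and D̂ₓK = 12q/p⁵ ≠ 0. -/

import Mathlib

/-!
Invariants of the third-order ODE `u''' = f(x, u, u', u'')` under contact
transformations, following Cartan's equivalence method.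
We write `p = u'`, `q = u''`.
-/

noncomputable section

/-- The real cube root of a real number. -/
def cbrt (y : ℝ) : ℝ := if 0 ≤ y then y ^ ((1 : ℝ)/3) else -((-y) ^ ((1 : ℝ)/3))

/-- Functions of `(x, u, p, q)`. -/
abbrev Fn : Type := ℝ → ℝ → ℝ → ℝ → ℝ

/-- Functions of `(x, u, p)`. -/
abbrev Fn3 : Type := ℝ → ℝ → ℝ → ℝ

/-- Partial derivative in `x` of a function of `(x,u,p,q)`. -/
def pdx (g : Fn) : Fn := fun x u p q => deriv (fun t => g t u p q) x
/-- Partial derivative in `u` of a function of `(x,u,p,q)`. -/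
def pdu (g : Fn) : Fn := fun x u p q => deriv (fun t => g x t p q) u
/-- Partial derivative in `p` of a function of `(x,u,p,q)`. -/
def pdp (g : Fn) : Fn := fun x u p q => deriv (fun t => g x u t q) p
/-- Partial derivative in `q` of a function of `(x,u,p,q)`. -/
def pdq (g : Fn) : Fn := fun x u p q => deriv (fun t => g x u p t) q

/-- Partial derivative in `x` of a function of `(x,u,p)`. -/
def pdx3 (g : Fn3) : Fn3 := fun x u p => deriv (fun t => g t u p) x
/-- Partial derivative in `u` of a function of `(x,u,p)`. -/
def pdu3 (g : Fn3) : Fn3 := fun x u p => deriv (fun t => g x t p) u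
/-- Partial derivative in `p` of a function of `(x,u,p)`. -/
def pdp3 (g : Fn3) : Fn3 := fun x u p => deriv (fun t => g x u t) p

/-- Lift of a function of `(x,u,p)` to a function of `(x,u,p,q)`, constant in `q`. -/
def lift (g : Fn3) : Fn := fun x u p _ => g x u p

/-- The total derivative operator `D̂ₓ = ∂ₓ + p ∂ᵤ + q ∂ₚ + f ∂_q` of the ODE `u''' = f`. -/
def Dhat (f g : Fn) : Fn := fun x u p q =>
  pdx g x u p q + p * pdu g x u p q + q * pdp g x u p q + f x u p q * pdq g x u p q

/-- `I₁ = −f_q`. -/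
def I1 (f : Fn) : Fn := fun x u p q => -(pdq f x u p q)

/-- `I₂ = −(2/9)I₁² − f_p − (1/3)D̂ₓI₁`. -/
def I2 (f : Fn) : Fn := fun x u p q =>
  -(2/9) * (I1 f x u p q)^2 - pdp f x u p q - (1/3) * Dhat f (I1 f) x u p q

/-- `I₃ = −(1/3)I₁I₂ − f_u − (1/2)D̂ₓI₂`. -/
def I3 (f : Fn) : Fn := fun x u p q =>
  -(1/3) * I1 f x u p q * I2 f x u p q - pdu f x u p q - (1/2) * Dhat f (I2 f) x u p q

/-- `J₃`, the real cube root of `I₃`. -/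
def J3 (f : Fn) : Fn := fun x u p q => cbrt (I3 f x u p q)

/-- `I₄ = (J₃)_q`. -/
def I4 (f : Fn) : Fn := pdq (J3 f)

/-- `I₅ = (1/(3J₃²))(I₁J₃ + 3D̂ₓJ₃)`. -/
def I5 (f : Fn) : Fn := fun x u p q =>
  (1 / (3 * (J3 f x u p q)^2)) * (I1 f x u p q * J3 f x u p q + 3 * Dhat f (J3 f) x u p q)

/-- `I₇ = −(I₅)_q J₃²`. -/
def I7 (f : Fn) : Fn := fun x u p q => -(pdq (I5 f) x u p q) * (J3 f x u p q)^2

/-- `I₉ = 2J₃D̂ₓI₅ − I₂ + J₃²I₅²`. -/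
def I9 (f : Fn) : Fn := fun x u p q =>
  2 * J3 f x u p q * Dhat f (I5 f) x u p q - I2 f x u p q
    + (J3 f x u p q)^2 * (I5 f x u p q)^2

/-- `K = I₉/J₃²`. -/
def Kinv (f : Fn) : Fn := fun x u p q => I9 f x u p q / (J3 f x u p q)^2

/-- `Q = −(I₁I₇ + 3J₃²(I₅)_p + 3(J₃)_u − 3J₃I₄D̂ₓI₅)/(3J₃)`. -/
def Qinv (f : Fn) : Fn := fun x u p q =>
  -(I1 f x u p q * I7 f x u p q + 3 * (J3 f x u p q)^2 * pdp (I5 f) x u p q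
      + 3 * pdu (J3 f) x u p q
      - 3 * J3 f x u p q * I4 f x u p q * Dhat f (I5 f) x u p q)
    / (3 * J3 f x u p q)

/-- `I₆ = (2/3)(J₃)_q I₁ − (1/3)(I₁)_q J₃ − 2(J₃)_p + 2J₃I₄I₅`. -/
def I6 (f : Fn) : Fn := fun x u p q =>
  (2/3) * pdq (J3 f) x u p q * I1 f x u p q - (1/3) * pdq (I1 f) x u p q * J3 f x u p q
    - 2 * pdp (J3 f) x u p q + 2 * J3 f x u p q * I4 f x u p q * I5 f x u p q

/-- `I₈ = (I₄)_q`. -/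
def I8 (f : Fn) : Fn := pdq (I4 f)

/-- `I₁₀ = I₄D̂ₓI₇ − J₃(I₇)_p + J₃²(I₄/J₃)_u`. -/
def I10 (f : Fn) : Fn := fun x u p q =>
  I4 f x u p q * Dhat f (I7 f) x u p q - J3 f x u p q * pdp (I7 f) x u p q
    + (J3 f x u p q)^2 *
      pdu (fun x' u' p' q' => I4 f x' u' p' q' / J3 f x' u' p' q') x u p q

/-- `I₁₁ = (J₃)_u − D̂ₓI₇`. -/
def I11 (f : Fn) : Fn := fun x u p q =>
  pdu (J3 f) x u p q - Dhat f (I7 f) x u p q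

/-- `I₁₂`. -/
def I12 (f : Fn) : Fn := fun x u p q =>
  6 * I1 f x u p q * J3 f x u p q *
      (I5 f x u p q * I7 f x u p q - I4 f x u p q * Dhat f (I5 f) x u p q)
    - 18 * (J3 f x u p q)^3 * I4 f x u p q
    + 6 * pdp (I5 f) x u p q * I1 f x u p q * (J3 f x u p q)^2
    - 18 * I2 f x u p q * J3 f x u p q * I4 f x u p q * I5 f x u p q
    - 18 * J3 f x u p q * I7 f x u p q * Dhat f (I5 f) x u p q
    + 18 * (J3 f x u p q)^2 * pdu (I5 f) x u p q
    + 18 * I2 f x u p q * Dhat f (I4 f) x u p q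
    + 2 * (I1 f x u p q)^2 * I7 f x u p q
    - 9 * pdp (I2 f) x u p q * J3 f x u p q
    + 6 * (J3 f x u p q)^2 *
        pdu (fun x' u' p' q' => I1 f x' u' p' q' / J3 f x' u' p' q') x u p q
    + 36 * I2 f x u p q * I7 f x u p q

/-- `I₁₃ = (J₃I₄I₅ − I₇)D̂ₓK + J₃K_u − J₃²I₅K_p`. -/
def I13 (f : Fn) : Fn := fun x u p q =>
  (J3 f x u p q * I4 f x u p q * I5 f x u p q - I7 f x u p q) * Dhat f (Kinv f) x u p q
    + J3 f x u p q * pdu (Kinv f) x u p q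
    - (J3 f x u p q)^2 * I5 f x u p q * pdp (Kinv f) x u p q

/-- `I₁₄ = K_q`. -/
def I14 (f : Fn) : Fn := pdq (Kinv f)

/-- `I₁₅ = I₄D̂ₓK − J₃K_p`. -/
def I15 (f : Fn) : Fn := fun x u p q =>
  I4 f x u p q * Dhat f (Kinv f) x u p q - J3 f x u p q * pdp (Kinv f) x u p q

/-!
The right-hand side is a polynomial, so `I₁`, `I₂ = 0`, `I₃ = −p³q³` and `J₃ = −pq` are
computed directly. On the open region `pq ≠ 0` the invariants `I₄`, `I₅`, `I₇` and `K`
then depend on `p` alone, so there `D̂ₓ` acts on them as `q ∂ₚ` and every relative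
invariant reduces to an identity between rational functions of `p` and `q`. Partial
derivatives are local, so identities valid on the region (`EqOnRegion`) may be
differentiated there; this is what lets `I₅` and `K`, defined with divisions by `J₃`, be
replaced by their closed forms.
-/

theorem cbrt_pow_three (t : ℝ) : cbrt (t ^ 3) = t := by
  rcases le_or_gt 0 t with ht | ht
  · rw [cbrt, if_pos (by positivity), ← Real.rpow_natCast, ← Real.rpow_mul ht]
    norm_num
  · rw [cbrt, if_neg (by linarith [Odd.pow_neg (n := 3) (by decide) ht]),
      show -t ^ 3 = (-t) ^ 3 by ring, ← Real.rpow_natCast, ← Real.rpow_mul (by linarith)]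
    norm_num

theorem deriv_neg_div_pow (c : ℝ) (n : ℕ) {t : ℝ} (ht : t ≠ 0) :
    deriv (fun s => -(c / s ^ n)) t = c * n / t ^ (n + 1) := by
  have h := ((hasDerivAt_pow n t).inv (pow_ne_zero n ht)).const_mul (-c)
  convert h.deriv using 1
  · congr 1
    funext s
    simp [div_eq_mul_inv]
  · rcases n with _ | n
    · simp
    · rw [Nat.add_sub_cancel]
      field_simp
      ring

def ofP (φ : ℝ → ℝ) : Fn := fun _ _ p _ => φ p

section ofP

variable (φ : ℝ → ℝ)

@[simp] theorem pdx_ofP : pdx (ofP φ) = 0 := by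
  funext x u p q; exact deriv_const x _

@[simp] theorem pdu_ofP : pdu (ofP φ) = 0 := by
  funext x u p q; exact deriv_const u _

@[simp] theorem pdq_ofP : pdq (ofP φ) = 0 := by
  funext x u p q; exact deriv_const q _

@[simp] theorem pdp_ofP : pdp (ofP φ) = ofP (deriv φ) := rfl

theorem Dhat_ofP (f : Fn) (x u p q : ℝ) : Dhat f (ofP φ) x u p q = q * deriv φ p := by
  simp [Dhat, ofP]

end ofP

@[simp] theorem pdp_zero : pdp 0 = 0 := by
  funext x u p q; exact deriv_const p 0

@[simp] theorem Dhat_zero (f : Fn) : Dhat f 0 = 0 := by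
  funext x u p q
  simp [Dhat, pdx, pdu, pdp, pdq]

def EqOnRegion (g h : Fn) : Prop := ∀ x u p q, p ≠ 0 → q ≠ 0 → g x u p q = h x u p q

namespace EqOnRegion

variable {f g h k : Fn}

theorem trans (hgh : EqOnRegion g h) (hhk : EqOnRegion h k) : EqOnRegion g k :=
  fun x u p q hp hq => (hgh x u p q hp hq).trans (hhk x u p q hp hq)

theorem pdx (hgh : EqOnRegion g h) : EqOnRegion (pdx g) (pdx h) := fun x u p q hp hq =>
  congrArg (deriv · x) (funext fun t => hgh t u p q hp hq)

theorem pdu (hgh : EqOnRegion g h) : EqOnRegion (pdu g) (pdu h) := fun x u p q hp hq =>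
  congrArg (deriv · u) (funext fun t => hgh x t p q hp hq)

theorem pdp (hgh : EqOnRegion g h) : EqOnRegion (pdp g) (pdp h) := fun x u p q hp hq =>
  Filter.EventuallyEq.deriv_eq <| by
    filter_upwards [eventually_ne_nhds hp] with t ht using hgh x u t q ht hq

theorem pdq (hgh : EqOnRegion g h) : EqOnRegion (pdq g) (pdq h) := fun x u p q hp hq =>
  Filter.EventuallyEq.deriv_eq <| by
    filter_upwards [eventually_ne_nhds hq] with t ht using hgh x u p t hp ht

theorem dhat (hgh : EqOnRegion g h) : EqOnRegion (Dhat f g) (Dhat f h) :=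
  fun x u p q hp hq => by
    simp only [Dhat, hgh.pdx x u p q hp hq, hgh.pdu x u p q hp hq, hgh.pdp x u p q hp hq,
      hgh.pdq x u p q hp hq]

end EqOnRegion

namespace Example2

def rhs : Fn := fun x u p q => -x * p ^ 4 * q ^ 3 + u * p ^ 3 * q ^ 3

theorem I1_rhs : I1 rhs = fun x u p q => 3 * p ^ 3 * q ^ 2 * (p * x - u) := by
  funext x u p q
  simp (disch := fun_prop) only [I1, pdq, rhs, deriv_fun_add, deriv_fun_mul, deriv.fun_neg',
    deriv_const', deriv_fun_pow, deriv_id'']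
  ring

theorem pdq_I1_rhs : pdq (I1 rhs) = fun x u p q => 6 * p ^ 3 * q * (p * x - u) := by
  funext x u p q
  simp (disch := fun_prop) only [pdq, I1_rhs, deriv_fun_sub, deriv_fun_mul, deriv_const',
    deriv_fun_pow, deriv_id'']
  ring

theorem I2_rhs : I2 rhs = 0 := by
  funext x u p q
  simp (disch := fun_prop) only [I2, Dhat, pdx, pdu, pdp, pdq, I1_rhs, rhs, deriv_fun_add,
    deriv_fun_sub, deriv_fun_mul, deriv.fun_neg', deriv_const', deriv_fun_pow, deriv_id'',
    deriv_const_mul_id', deriv_const_sub_id', Pi.zero_apply]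
  ring

theorem I3_rhs : I3 rhs = fun _ _ p q => -(p ^ 3 * q ^ 3) := by
  funext x u p q
  simp (disch := fun_prop) only [I3, Dhat, pdx, pdu, pdp, pdq, I2_rhs, rhs, deriv_fun_add,
    deriv_fun_mul, deriv.fun_neg', deriv_const', deriv_fun_pow, deriv_id'', Pi.zero_apply]
  ring

theorem J3_rhs : J3 rhs = fun _ _ p q => -(p * q) := by
  funext x u p q
  simp only [J3, I3_rhs]
  rw [show -(p ^ 3 * q ^ 3) = (-(p * q)) ^ 3 by ring, cbrt_pow_three]

theorem pdu_J3_rhs : pdu (J3 rhs) = 0 := by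
  funext x u p q
  simp only [pdu, J3_rhs, deriv_const']
  rfl

theorem pdp_J3_rhs : pdp (J3 rhs) = fun _ _ _ q => -q := by
  funext x u p q
  simp (disch := fun_prop) only [pdp, J3_rhs, deriv_fun_mul, deriv.fun_neg', deriv_const',
    deriv_id'']
  ring

theorem I4_rhs : I4 rhs = ofP Neg.neg := by
  funext x u p q
  simp only [I4, pdq, J3_rhs, deriv.fun_neg', deriv_const_mul_id']
  rfl

theorem Dhat_J3_rhs :
    Dhat rhs (J3 rhs) = fun x u p q => -q ^ 2 + x * p ^ 5 * q ^ 3 - u * p ^ 4 * q ^ 3 := by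
  funext x u p q
  simp (disch := fun_prop) only [Dhat, pdx, pdu, pdp, pdq, J3_rhs, rhs, deriv_fun_mul,
    deriv.fun_neg', deriv_const', deriv_id'', deriv_const_mul_id']
  ring

theorem I5_rhs : EqOnRegion (I5 rhs) (ofP fun p => -(1 / p ^ 2)) := fun x u p q hp hq => by
  simp only [I5, Dhat_J3_rhs]
  simp only [I1_rhs, J3_rhs, ofP]
  field_simp
  ring

theorem pdp_I5_rhs : EqOnRegion (pdp (I5 rhs)) (fun _ _ p _ => 2 / p ^ 3) :=
  I5_rhs.pdp.trans fun _ _ p _ hp _ => (deriv_neg_div_pow 1 2 hp).trans (by norm_num)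

theorem Dhat_I5_rhs : EqOnRegion (Dhat rhs (I5 rhs)) (fun _ _ p q => 2 * q / p ^ 3) :=
  I5_rhs.dhat.trans fun _ _ p q hp _ => by
    rw [Dhat_ofP, deriv_neg_div_pow 1 2 hp]
    ring

theorem Kinv_rhs : EqOnRegion (Kinv rhs) (ofP fun p => -(3 / p ^ 4)) := fun x u p q hp hq => by
  simp only [Kinv, I9, Dhat_I5_rhs x u p q hp hq, I5_rhs x u p q hp hq, I2_rhs, J3_rhs, ofP,
    Pi.zero_apply]
  field_simp
  ring

theorem pdp_Kinv_rhs : EqOnRegion (pdp (Kinv rhs)) (fun _ _ p _ => 12 / p ^ 5) :=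
  Kinv_rhs.pdp.trans fun _ _ p _ hp _ => (deriv_neg_div_pow 3 4 hp).trans (by norm_num)

theorem Dhat_Kinv_rhs : EqOnRegion (Dhat rhs (Kinv rhs)) (fun _ _ p q => 12 * q / p ^ 5) :=
  Kinv_rhs.dhat.trans fun _ _ p q hp _ => by
    rw [Dhat_ofP, deriv_neg_div_pow 3 4 hp]
    ring

theorem I7_rhs : EqOnRegion (I7 rhs) 0 := fun x u p q hp hq => by
  rw [I7, I5_rhs.pdq x u p q hp hq, pdq_ofP]
  simp

theorem Dhat_I7_rhs : EqOnRegion (Dhat rhs (I7 rhs)) 0 := fun x u p q hp hq => by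
  rw [I7_rhs.dhat x u p q hp hq, Dhat_zero]

theorem Qinv_rhs : EqOnRegion (Qinv rhs) 0 := fun x u p q hp hq => by
  rw [Qinv, I7_rhs x u p q hp hq, pdp_I5_rhs x u p q hp hq, Dhat_I5_rhs x u p q hp hq, pdu_J3_rhs]
  simp only [J3_rhs, I4_rhs, ofP, Pi.zero_apply]
  field_simp
  ring

theorem I6_rhs : EqOnRegion (I6 rhs) 0 := fun x u p q hp hq => by
  rw [I6, ← I4, I5_rhs x u p q hp hq, pdq_I1_rhs, pdp_J3_rhs]
  simp only [I1_rhs, J3_rhs, I4_rhs, ofP, Pi.zero_apply]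
  field_simp
  ring

theorem I8_rhs : I8 rhs = 0 := by
  rw [I8, I4_rhs, pdq_ofP]

theorem pdu_I4_div_J3_rhs : pdu (fun x u p q => I4 rhs x u p q / J3 rhs x u p q) = 0 := by
  funext x u p q
  simp only [pdu, I4_rhs, J3_rhs, ofP, deriv_const']
  rfl

theorem I10_rhs : EqOnRegion (I10 rhs) 0 := fun x u p q hp hq => by
  rw [I10, Dhat_I7_rhs x u p q hp hq, I7_rhs.pdp x u p q hp hq, pdp_zero, pdu_I4_div_J3_rhs]
  simp

theorem I11_rhs : EqOnRegion (I11 rhs) 0 := fun x u p q hp hq => by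
  rw [I11, Dhat_I7_rhs x u p q hp hq, pdu_J3_rhs]
  simp

theorem I1_div_J3_rhs : EqOnRegion (fun x u p q => I1 rhs x u p q / J3 rhs x u p q)
    (fun x u p q => -3 * p ^ 2 * q * (p * x - u)) := fun x u p q hp hq => by
  simp only [I1_rhs, J3_rhs]
  field_simp

theorem pdu_I1_div_J3_rhs : EqOnRegion (pdu (fun x u p q => I1 rhs x u p q / J3 rhs x u p q))
    (fun _ _ p q => 3 * p ^ 2 * q) :=
  I1_div_J3_rhs.pdu.trans fun x u p q _ _ => by
    simp only [pdu, deriv_const_mul_field', deriv_const_sub_id']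
    ring

theorem I12_rhs : EqOnRegion (I12 rhs) 0 := fun x u p q hp hq => by
  rw [I12, pdu_I1_div_J3_rhs x u p q hp hq, I7_rhs x u p q hp hq, I5_rhs x u p q hp hq,
    pdp_I5_rhs x u p q hp hq, Dhat_I5_rhs x u p q hp hq, I5_rhs.pdu x u p q hp hq, pdu_ofP,
    I2_rhs, pdp_zero]
  simp only [I1_rhs, J3_rhs, I4_rhs, ofP, Pi.zero_apply]
  field_simp
  ring

theorem I13_rhs : EqOnRegion (I13 rhs) 0 := fun x u p q hp hq => by
  rw [I13, Dhat_Kinv_rhs x u p q hp hq, Kinv_rhs.pdu x u p q hp hq, pdu_ofP,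
    pdp_Kinv_rhs x u p q hp hq, I5_rhs x u p q hp hq, I7_rhs x u p q hp hq]
  simp only [J3_rhs, I4_rhs, ofP, Pi.zero_apply]
  field_simp
  ring

theorem I14_rhs : EqOnRegion (I14 rhs) 0 := fun x u p q hp hq => by
  rw [I14, Kinv_rhs.pdq x u p q hp hq, pdq_ofP]

theorem I15_rhs : EqOnRegion (I15 rhs) 0 := fun x u p q hp hq => by
  rw [I15, Dhat_Kinv_rhs x u p q hp hq, pdp_Kinv_rhs x u p q hp hq]
  simp only [J3_rhs, I4_rhs, ofP, Pi.zero_apply]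
  field_simp
  ring

end Example2

/-- For `f(x,u,p,q) = −x·p⁴q³ + u·p³q³` on `{p ≠ 0, q ≠ 0}`, the
invariants evaluate as listed, all the relative invariants
`I₆, I₈, I₁₀, I₁₁, I₁₂, I₁₃, I₁₄, I₁₅` vanish identically, and
`D̂ₓK = 12q/p⁵ ≠ 0`. -/
theorem invariants_of_example2
    (f : Fn) (hfdef : f = fun x u p q => -x * p^4 * q^3 + u * p^3 * q^3) :
    ∀ x u p q : ℝ, p ≠ 0 → q ≠ 0 →
      I1 f x u p q = 3 * p^3 * q^2 * (p*x - u) ∧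
      I2 f x u p q = 0 ∧
      I3 f x u p q = -(p^3 * q^3) ∧
      I3 f x u p q ≠ 0 ∧
      J3 f x u p q = -(p*q) ∧
      I4 f x u p q = -p ∧
      I5 f x u p q = -(1 / p^2) ∧
      I7 f x u p q = 0 ∧
      Qinv f x u p q = 0 ∧
      Kinv f x u p q = -(3 / p^4) ∧
      I6 f x u p q = 0 ∧
      I8 f x u p q = 0 ∧
      I10 f x u p q = 0 ∧
      I11 f x u p q = 0 ∧
      I12 f x u p q = 0 ∧
      I13 f x u p q = 0 ∧
      I14 f x u p q = 0 ∧
      I15 f x u p q = 0 ∧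
      Dhat f (Kinv f) x u p q = 12 * q / p^5 ∧
      Dhat f (Kinv f) x u p q ≠ 0 := by
  obtain rfl : f = Example2.rhs := hfdef
  intro x u p q hp hq
  open Example2 in exact
    have hI3 : I3 rhs x u p q = -(p ^ 3 * q ^ 3) := by rw [I3_rhs]
    have hDK := Dhat_Kinv_rhs x u p q hp hq
    ⟨by rw [I1_rhs], by simp [I2_rhs], hI3, hI3 ▸ neg_ne_zero.2 (by positivity), by rw [J3_rhs],
      by simp [I4_rhs, ofP], I5_rhs x u p q hp hq, I7_rhs x u p q hp hq, Qinv_rhs x u p q hp hq,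
      Kinv_rhs x u p q hp hq, I6_rhs x u p q hp hq, by simp [I8_rhs], I10_rhs x u p q hp hq,
      I11_rhs x u p q hp hq, I12_rhs x u p q hp hq, I13_rhs x u p q hp hq,
      I14_rhs x u p q hp hq, I15_rhs x u p q hp hq, hDK, hDK ▸ by positivity⟩

end
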